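/- arXiv:1101.2934 — 2 statements merged into one kernel-verified Lean document; each statement's English description precedes it below -/
import Mathlib

section
/- For all t ∈ [0, 2/5], 1 + 3t + √(6t − 15t²) ≤ (8 + 2√6)/5, and the maximum value (8+2√6)/5 of g(t)=1+3t+√(6t−15t²) on [0, 2/5] is attained at t = (4+√6)/20; moreover (8 + 2√6)/5 < 2.58. -/
/-!
Completing the square, with `c = (3 + 2√6)/5` and `t₀ = (4 + √6)/20`:
`(c - 3t)² - (6t - 15t²) = 24 (t - t₀)²`.
Hence `√(6t - 15t²) ≤ c - 3t` wherever `c - 3t ≥ 0`, with equality at `t₀`,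
so `1 + 3t + √(6t - 15t²) ≤ 1 + c = (8 + 2√6)/5 < 2.58` since `√6 < 2.45`.
-/

open Real

lemma sqrt_six_lt : √6 < 2.45 := by
  rw [sqrt_lt' (by norm_num)]
  norm_num

lemma sq_sub_quadratic_eq (t : ℝ) :
    ((3 + 2 * √6) / 5 - 3 * t) ^ 2 - (6 * t - 15 * t ^ 2)
      = 24 * (t - (4 + √6) / 20) ^ 2 := by
  ring_nf
  rw [sq_sqrt (by norm_num)]
  ring

lemma sqrt_quadratic_le {t : ℝ} (ht : t ≤ 2 / 5) :
    √(6 * t - 15 * t ^ 2) ≤ (3 + 2 * √6) / 5 - 3 * t := by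
  have two_le_sqrt_six : 2 ≤ √6 := le_sqrt_of_sq_le (by norm_num)
  refine sqrt_le_iff.mpr ⟨by linarith, ?_⟩
  nlinarith [sq_sub_quadratic_eq t, sq_nonneg (t - (4 + √6) / 20)]

lemma quadratic_at_optimum :
    6 * ((4 + √6) / 20) - 15 * ((4 + √6) / 20) ^ 2 = (√6 / 4) ^ 2 := by
  ring_nf
  rw [sq_sqrt (by norm_num)]
  ring

theorem four_equal_tiles_bound :
    (∀ t : ℝ, 0 ≤ t → t ≤ 2/5 →
      1 + 3 * t + Real.sqrt (6 * t - 15 * t ^ 2) ≤ (8 + 2 * Real.sqrt 6) / 5) ∧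
    (1 + 3 * ((4 + Real.sqrt 6) / 20) +
      Real.sqrt (6 * ((4 + Real.sqrt 6) / 20) - 15 * ((4 + Real.sqrt 6) / 20) ^ 2)
        = (8 + 2 * Real.sqrt 6) / 5) ∧
    (8 + 2 * Real.sqrt 6) / 5 < 2.58 := by
  refine ⟨fun t _ ht => ?_, ?_, ?_⟩
  · linarith [sqrt_quadratic_le ht]
  · rw [quadratic_at_optimum, sqrt_sq (by positivity)]
    ring
  · linarith [sqrt_six_lt]
end

section
/- Suppose nonnegative reals satisfy: a tiling of the unit square by 8 squares contains squares of sides 1−t, t, t, t (with 2/5 ≤ t < 1/2) and the remaining 4 squares have total area 2t − 4t². Then the total side length of all 8 squares is at most (1−t) + 3t + √(4(2t−4t²)) ≤ 13/5. -/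
open Finset

/-!
Cauchy–Schwarz bounds the total side of the four remaining squares by `√(4 · area)`, and
`(8/5 - 2t)² - 4(2t - 4t²) = 20 (t - 2/5) (t - 8/25)` shows that `1 + 2t + 2√(2t - 4t²)`
stays below `13/5` once `t ≥ 2/5`, with equality at `t = 2/5`.
-/

theorem Finset.sum_le_sqrt_card_mul_sum_sq {ι : Type*} (s : Finset ι) (f : ι → ℝ) :
    ∑ i ∈ s, f i ≤ √(#s * ∑ i ∈ s, f i ^ 2) :=
  (le_abs_self _).trans (Real.abs_le_sqrt (sq_sum_le_card_mul_sum_sq (s := s) (f := f)))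

theorem sqrt_four_mul_sub_le {t : ℝ} (h0 : 2 / 5 ≤ t) (h1 : t ≤ 4 / 5) :
    √(4 * (2 * t - 4 * t ^ 2)) ≤ 8 / 5 - 2 * t :=
  Real.sqrt_le_iff.mpr ⟨by linarith, by nlinarith⟩

theorem combined_bound_general (t : ℝ) (h0 : 2/5 ≤ t) (h1 : t < 1/2)
    (s : Fin 4 → ℝ)
    (harea : ∑ i, s i ^ 2 = 2 * t - 4 * t ^ 2) :
    (1 - t) + 3 * t + ∑ i, s i ≤ (1 - t) + 3 * t + Real.sqrt (4 * (2 * t - 4 * t ^ 2)) ∧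
    (1 - t) + 3 * t + Real.sqrt (4 * (2 * t - 4 * t ^ 2)) ≤ 13/5 := by
  have hcs := sum_le_sqrt_card_mul_sum_sq univ s
  rw [harea, card_univ, Fintype.card_fin, Nat.cast_ofNat] at hcs
  exact ⟨by linarith, by linarith [sqrt_four_mul_sub_le h0 (by linarith)]⟩

theorem combined_bound (t : ℝ) (h0 : 2/5 ≤ t) (h1 : t < 1/2)
    (s : Fin 4 → ℝ) (hs : ∀ i, 0 ≤ s i)
    (harea : ∑ i, s i ^ 2 = 2 * t - 4 * t ^ 2) :
    (1 - t) + 3 * t + ∑ i, s i ≤ (1 - t) + 3 * t + Real.sqrt (4 * (2 * t - 4 * t ^ 2)) ∧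
    (1 - t) + 3 * t + Real.sqrt (4 * (2 * t - 4 * t ^ 2)) ≤ 13/5 :=
  combined_bound_general t h0 h1 s harea
end
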